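/- arXiv:2212.13115 — 2 statements merged into one kernel-verified Lean document; each statement's English description precedes it below -/
import Mathlib

section
/- Let γ : ℝ → ℝ² be the arc-length parameterized circle γ(σ) = R·(sin(σ/R), 1 − cos(σ/R)) of radius R > 0, and let L ⊆ ℝ² be a straight line (a convex set) intersecting the circle at two distinct points γ(σ₁) and γ(σ₂) with 0 < σ₂ − σ₁ < πR. Then the image of L ∩ {points with well-defined Frenet coordinates} under the Frenet transformation p ↦ (s*(p), n(p)) — where s*(p) minimizes ‖p − γ(σ)‖ and n(p) is the signed normal distance — is not a convex subset of ℝ²: the transformed points of γ(σ₁), γ(σ₂) have n = 0, but the point of L at parameter between them has n ≠ 0. -/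
open Real

/-- The arc-length parameterized circle of radius `R` through the origin. -/
noncomputable def circleCurve (R : ℝ) (σ : ℝ) : ℝ × ℝ :=
  (R * Real.sin (σ / R), R * (1 - Real.cos (σ / R)))

/-- Unit normal (90°-rotated tangent) of `circleCurve R` at parameter `σ`. -/
noncomputable def circleNormal (R : ℝ) (σ : ℝ) : ℝ × ℝ :=
  (-Real.sin (σ / R), Real.cos (σ / R))

lemma cos_diff_lt_one (R σ₁ σ₂ : ℝ) (hR : 0 < R)
    (hσ : 0 < σ₂ - σ₁) (hσπ : σ₂ - σ₁ < Real.pi * R) :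
    Real.cos (σ₂ / R - σ₁ / R) < 1 := by
  have hΔ : σ₂ / R - σ₁ / R = (σ₂ - σ₁) / R := by ring
  rw [hΔ]
  set d : ℝ := (σ₂ - σ₁) / R with hd
  have hd0 : 0 < d := div_pos hσ hR
  have hdπ : d < Real.pi := by
    rw [hd, div_lt_iff₀ hR]; linarith [hσπ]
  have hs : 0 < Real.sin (d / 2) :=
    Real.sin_pos_of_pos_of_lt_pi (by linarith) (by linarith [Real.pi_pos])
  have hcos := Real.cos_sq (d / 2)
  rw [show 2 * (d / 2) = d by ring] at hcos
  have h1 := Real.sin_sq_add_cos_sq (d / 2)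
  nlinarith

/-- Positivity of the signed normal offset at strictly interior chord points. -/
lemma interior_pos (R σ₁ σ₂ : ℝ) (hR : 0 < R)
    (hΔ : Real.cos (σ₂ / R - σ₁ / R) < 1)
    (t : ℝ) (ht0 : 0 < t) (ht1 : t < 1) (s : ℝ)
    (p : ℝ × ℝ)
    (hp1 : p.1 = (1 - t) * (circleCurve R σ₁).1 + t * (circleCurve R σ₂).1)
    (hp2 : p.2 = (1 - t) * (circleCurve R σ₁).2 + t * (circleCurve R σ₂).2) :
    0 < (p.1 - (circleCurve R s).1) * (circleNormal R s).1
      + (p.2 - (circleCurve R s).2) * (circleNormal R s).2 := by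
  simp only [circleCurve, circleNormal] at hp1 hp2 ⊢
  have h3 := Real.sin_sq_add_cos_sq (s / R)
  have hcos := Real.cos_sub (σ₂ / R) (σ₁ / R)
  have h1 := Real.sin_sq_add_cos_sq (σ₁ / R)
  have h2 := Real.sin_sq_add_cos_sq (σ₂ / R)
  -- the point is strictly inside the circle
  have hq : p.1 ^ 2 + (p.2 - R) ^ 2 < R ^ 2 := by
    have hid : R ^ 2 - (p.1 ^ 2 + (p.2 - R) ^ 2)
        = 2 * R ^ 2 * (t * (1 - t)) * (1 - Real.cos (σ₂ / R - σ₁ / R)) := by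
      rw [hp1, hp2]
      linear_combination (-(R ^ 2 * (1 - t) ^ 2)) * h1 + (-(R ^ 2 * t ^ 2)) * h2
        + (2 * R ^ 2 * t * (1 - t)) * hcos
    have hfac : 0 < 2 * R ^ 2 * (t * (1 - t)) * (1 - Real.cos (σ₂ / R - σ₁ / R)) := by
      have h4 : 0 < t * (1 - t) := mul_pos ht0 (by linarith)
      have h5 : 0 < R ^ 2 := by positivity
      have h6 : 0 < 1 - Real.cos (σ₂ / R - σ₁ / R) := by linarith
      positivity
    linarith
  -- Cauchy-Schwarz bound on the projection
  have hxe : (p.1 * (-Real.sin (s / R)) + (p.2 - R) * Real.cos (s / R)) ^ 2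
      + (p.1 * Real.cos (s / R) + (p.2 - R) * Real.sin (s / R)) ^ 2
      = (p.1 ^ 2 + (p.2 - R) ^ 2) * (Real.sin (s / R) ^ 2 + Real.cos (s / R) ^ 2) := by
    ring
  rw [h3, mul_one] at hxe
  have hxsq : (p.1 * (-Real.sin (s / R)) + (p.2 - R) * Real.cos (s / R)) ^ 2
      ≤ p.1 ^ 2 + (p.2 - R) ^ 2 := by
    nlinarith [sq_nonneg (p.1 * Real.cos (s / R) + (p.2 - R) * Real.sin (s / R))]
  have hgt : -R < p.1 * (-Real.sin (s / R)) + (p.2 - R) * Real.cos (s / R) := by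
    nlinarith [sq_nonneg (R + (p.1 * (-Real.sin (s / R)) + (p.2 - R) * Real.cos (s / R)))]
  have hfin : (p.1 - R * Real.sin (s / R)) * (-Real.sin (s / R))
      + (p.2 - R * (1 - Real.cos (s / R))) * Real.cos (s / R)
      = R + (p.1 * (-Real.sin (s / R)) + (p.2 - R) * Real.cos (s / R)) := by
    linear_combination R * h3
  rw [hfin]
  linarith

/-- Nonconvexity of the Frenet image of a convex set (Sec. III-C of the
paper): let `L` be the chord (a convex set) of a circular road joining
`γ(σ₁)` and `γ(σ₂)`, `0 < σ₂ - σ₁ < πR`, and let `F` be the Frenet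
transformation `p ↦ (s*(p), n(p))`, where `s*(p)` minimizes the distance to
the curve (taken on the near arc) and `n(p)` is the signed normal distance.
Then the image `F '' L` is not convex; indeed the endpoints have `n = 0`
while strictly intermediate chord points have `n ≠ 0`. -/
theorem frenet_image_of_chord_not_convex
    (R σ₁ σ₂ : ℝ) (hR : 0 < R)
    (hσ : 0 < σ₂ - σ₁) (hσπ : σ₂ - σ₁ < Real.pi * R)
    (F : ℝ × ℝ → ℝ × ℝ)
    (hF : ∀ p ∈ segment ℝ (circleCurve R σ₁) (circleCurve R σ₂),
      (F p).1 ∈ Set.Icc σ₁ σ₂ ∧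
      (∀ σ : ℝ,
        (p.1 - (circleCurve R (F p).1).1) ^ 2
            + (p.2 - (circleCurve R (F p).1).2) ^ 2 ≤
          (p.1 - (circleCurve R σ).1) ^ 2 + (p.2 - (circleCurve R σ).2) ^ 2) ∧
      (F p).2 =
        (p.1 - (circleCurve R (F p).1).1) * (circleNormal R (F p).1).1
          + (p.2 - (circleCurve R (F p).1).2) * (circleNormal R (F p).1).2) :
    (F (circleCurve R σ₁)).2 = 0 ∧
    (F (circleCurve R σ₂)).2 = 0 ∧
    (F (midpoint ℝ (circleCurve R σ₁) (circleCurve R σ₂))).2 ≠ 0 ∧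
    ¬ Convex ℝ (F '' segment ℝ (circleCurve R σ₁) (circleCurve R σ₂)) := by
  have hΔ : Real.cos (σ₂ / R - σ₁ / R) < 1 := cos_diff_lt_one R σ₁ σ₂ hR hσ hσπ
  have hm1 : circleCurve R σ₁ ∈ segment ℝ (circleCurve R σ₁) (circleCurve R σ₂) :=
    left_mem_segment ℝ _ _
  have hm2 : circleCurve R σ₂ ∈ segment ℝ (circleCurve R σ₁) (circleCurve R σ₂) :=
    right_mem_segment ℝ _ _
  -- endpoint analysis
  have hend : ∀ σ : ℝ, circleCurve R σ ∈ segment ℝ (circleCurve R σ₁) (circleCurve R σ₂) →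
      circleCurve R (F (circleCurve R σ)).1 = circleCurve R σ ∧
      (F (circleCurve R σ)).2 = 0 := by
    intro σ hmem
    obtain ⟨_, h2, h3⟩ := hF _ hmem
    have := h2 σ
    simp only [sub_self] at this
    have e1 : (circleCurve R σ).1 - (circleCurve R (F (circleCurve R σ)).1).1 = 0 := by
      nlinarith [sq_nonneg ((circleCurve R σ).1 - (circleCurve R (F (circleCurve R σ)).1).1),
        sq_nonneg ((circleCurve R σ).2 - (circleCurve R (F (circleCurve R σ)).1).2)]
    have e2 : (circleCurve R σ).2 - (circleCurve R (F (circleCurve R σ)).1).2 = 0 := by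
      nlinarith [sq_nonneg ((circleCurve R σ).1 - (circleCurve R (F (circleCurve R σ)).1).1),
        sq_nonneg ((circleCurve R σ).2 - (circleCurve R (F (circleCurve R σ)).1).2)]
    constructor
    · exact Prod.ext (by linarith) (by linarith)
    · rw [h3, e1, e2]; ring
  obtain ⟨he1, hz1⟩ := hend σ₁ hm1
  obtain ⟨he2, hz2⟩ := hend σ₂ hm2
  -- the two endpoints are distinct
  have hne : circleCurve R σ₁ ≠ circleCurve R σ₂ := by
    intro h
    have h1 : R * Real.sin (σ₁ / R) = R * Real.sin (σ₂ / R) := congrArg Prod.fst h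
    have h2 : R * (1 - Real.cos (σ₁ / R)) = R * (1 - Real.cos (σ₂ / R)) := congrArg Prod.snd h
    have hs : Real.sin (σ₁ / R) = Real.sin (σ₂ / R) := mul_left_cancel₀ hR.ne' h1
    have hc : Real.cos (σ₁ / R) = Real.cos (σ₂ / R) := by
      have := mul_left_cancel₀ hR.ne' h2; linarith
    have hcs := Real.cos_sub (σ₂ / R) (σ₁ / R)
    have h0 := Real.sin_sq_add_cos_sq (σ₁ / R)
    have hone : Real.cos (σ₂ / R - σ₁ / R) = 1 := by
      rw [hcs, ← hs, ← hc]; linear_combination h0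
    linarith
  have hne1 : (F (circleCurve R σ₁)).1 ≠ (F (circleCurve R σ₂)).1 := by
    intro h
    apply hne
    rw [← he1, ← he2, h]
  -- interior positivity in segment form
  have hint : ∀ p ∈ segment ℝ (circleCurve R σ₁) (circleCurve R σ₂),
      p ≠ circleCurve R σ₁ → p ≠ circleCurve R σ₂ → 0 < (F p).2 := by
    intro p hp hp1 hp2
    obtain ⟨_, _, h3⟩ := hF p hp
    rw [segment_eq_image] at hp
    obtain ⟨t, ht, hpt⟩ := hp
    rcases eq_or_lt_of_le ht.1 with h0 | h0
    · exfalso; apply hp1; rw [← hpt, ← h0]; simp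
    rcases eq_or_lt_of_le ht.2 with h1 | h1
    · exfalso; apply hp2; rw [← hpt, h1]; simp
    rw [h3]
    exact interior_pos R σ₁ σ₂ hR hΔ t h0 h1 _ p
      (by rw [← hpt]; simp [smul_eq_mul])
      (by rw [← hpt]; simp [smul_eq_mul])
  -- midpoint has positive offset
  have hmid : 0 < (F (midpoint ℝ (circleCurve R σ₁) (circleCurve R σ₂))).2 := by
    apply hint _ (midpoint_mem_segment _ _)
    · intro h; exact hne ((midpoint_eq_left_iff (R := ℝ)).mp h)
    · intro h; exact hne ((midpoint_eq_right_iff (R := ℝ)).mp h)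
  refine ⟨hz1, hz2, hmid.ne', ?_⟩
  -- nonconvexity
  intro hC
  have ha : F (circleCurve R σ₁) ∈ F '' segment ℝ (circleCurve R σ₁) (circleCurve R σ₂) :=
    ⟨_, hm1, rfl⟩
  have hb : F (circleCurve R σ₂) ∈ F '' segment ℝ (circleCurve R σ₁) (circleCurve R σ₂) :=
    ⟨_, hm2, rfl⟩
  have hmem : (1/2 : ℝ) • F (circleCurve R σ₁) + (1/2 : ℝ) • F (circleCurve R σ₂)
      ∈ F '' segment ℝ (circleCurve R σ₁) (circleCurve R σ₂) :=
    hC ha hb (by norm_num) (by norm_num) (by norm_num)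
  obtain ⟨p, hp, hFp⟩ := hmem
  have hsnd : (F p).2 = 0 := by
    rw [hFp]; simp [hz1, hz2]
  have hfst : (F p).1
      = (1/2) * (F (circleCurve R σ₁)).1 + (1/2) * (F (circleCurve R σ₂)).1 := by
    rw [hFp]; simp [smul_eq_mul]
  rcases eq_or_ne p (circleCurve R σ₁) with h | h
  · rw [h] at hfst
    exact hne1 (by linarith)
  rcases eq_or_ne p (circleCurve R σ₂) with h2 | h2
  · rw [h2] at hfst
    exact hne1 (by linarith)
  exact absurd hsnd (hint p hp h h2).ne'
end

section
/- Consider Frenet states (s(t), n(t), α(t)) evolving as ṡ = v cos α/(1 − nκ(s)), ṅ = v sin α, α̇ = (v/l)·tan δ − κ(s)·v cos α/(1 − nκ(s)), with a unit-speed C² reference curve γ with tangent angle φ^γ, (φ^γ)' = κ, and 1 − n(t)κ(s(t)) > 0. Define Cartesian states (x(t), y(t), φ(t)) = F⁻¹(s(t), n(t), α(t)) = (γ_x(s) − n sin φ^γ(s), γ_y(s) + n cos φ^γ(s), φ^γ(s) + α). Then (x, y, φ) satisfies the Cartesian kinematic ODE ẋ = v cos φ, ẏ = v sin φ, φ̇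 = (v/l)·tan δ. -/
/-!
Moving along the normal offset `γ(s) + n N(s)` of a unit-speed curve with tangent `T` and
curvature `κ` has velocity `(1 - n κ) ṡ T + ṅ N`. The Frenet ODE makes this
`v (cos α T + sin α N)`, which is `v (cos φ, sin φ)` for `φ = φγ(s) + α`, while the `κ`-terms
cancel in `φ̇`.
-/

open Real

section NormalOffset

variable {γ : ℝ → ℝ × ℝ} {φγ κ s n : ℝ → ℝ} {t s' n' : ℝ}

theorem hasDerivAt_normalOffset_fst (hγ : HasDerivAt γ (cos (φγ (s t)), sin (φγ (s t))) (s t))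
    (hφγ : HasDerivAt φγ (κ (s t)) (s t)) (hs : HasDerivAt s s' t) (hn : HasDerivAt n n' t) :
    HasDerivAt (fun τ => (γ (s τ)).1 - n τ * sin (φγ (s τ)))
      ((1 - n t * κ (s t)) * s' * cos (φγ (s t)) - n' * sin (φγ (s t))) t :=
  (HasDerivAt.comp t hγ.fst hs |>.sub (hn.mul (hφγ.comp t hs).sin)).congr_deriv
    (by rw [Function.comp_apply]; ring)

theorem hasDerivAt_normalOffset_snd (hγ : HasDerivAt γ (cos (φγ (s t)), sin (φγ (s t))) (s t))
    (hφγ : HasDerivAt φγ (κ (s t)) (s t)) (hs : HasDerivAt s s' t) (hn : HasDerivAt n n' t) :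
    HasDerivAt (fun τ => (γ (s τ)).2 + n τ * cos (φγ (s τ)))
      ((1 - n t * κ (s t)) * s' * sin (φγ (s t)) + n' * cos (φγ (s t))) t :=
  (HasDerivAt.comp t hγ.snd hs |>.add (hn.mul (hφγ.comp t hs).cos)).congr_deriv
    (by rw [Function.comp_apply]; ring)

end NormalOffset

theorem frenet_ode_implies_cartesian_ode_general
    (γ : ℝ → ℝ × ℝ) (φγ κ : ℝ → ℝ)
    (hγ : ∀ σ, HasDerivAt γ (Real.cos (φγ σ), Real.sin (φγ σ)) σ)
    (hφγ : ∀ σ, HasDerivAt φγ (κ σ) σ)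
    (s n α v δ : ℝ → ℝ) (l : ℝ)
    (hpos : ∀ t, 0 < 1 - n t * κ (s t))
    (hs : ∀ t, HasDerivAt s (v t * Real.cos (α t) / (1 - n t * κ (s t))) t)
    (hn : ∀ t, HasDerivAt n (v t * Real.sin (α t)) t)
    (hα : ∀ t, HasDerivAt α
      (v t / l * Real.tan (δ t)
        - κ (s t) * v t * Real.cos (α t) / (1 - n t * κ (s t))) t) :
    ∀ t : ℝ,
      HasDerivAt (fun τ => (γ (s τ)).1 - n τ * Real.sin (φγ (s τ)))
        (v t * Real.cos (φγ (s t) + α t)) t ∧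
      HasDerivAt (fun τ => (γ (s τ)).2 + n τ * Real.cos (φγ (s τ)))
        (v t * Real.sin (φγ (s t) + α t)) t ∧
      HasDerivAt (fun τ => φγ (s τ) + α τ) (v t / l * Real.tan (δ t)) t := by
  intro t
  have hspeed : (1 - n t * κ (s t)) * (v t * cos (α t) / (1 - n t * κ (s t))) =
      v t * cos (α t) :=
    mul_div_cancel₀ _ (hpos t).ne'
  refine ⟨?_, ?_, ?_⟩
  · refine (hasDerivAt_normalOffset_fst (hγ _) (hφγ _) (hs t) (hn t)).congr_deriv ?_
    rw [hspeed, cos_add]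
    ring
  · refine (hasDerivAt_normalOffset_snd (hγ _) (hφγ _) (hs t) (hn t)).congr_deriv ?_
    rw [hspeed, sin_add]
    ring
  · exact ((hφγ _).comp t (hs t) |>.add (hα t)).congr_deriv (by ring)

/-- Index-reduction consistency (Eqs. (10)–(11) of the paper): if the Frenet
states `(s, n, α)` satisfy the Frenet-frame kinematic bicycle ODE along a
unit-speed C² reference curve `γ` (tangent angle `φγ`, curvature `κ`) with
`1 - n κ(s) > 0`, then the Cartesian states
`(x, y, φ) = F⁻¹(s, n, α)` satisfy the Cartesian kinematic ODE
`ẋ = v cos φ`, `ẏ = v sin φ`, `φ̇ = (v/l) tan δ`. -/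
theorem frenet_ode_implies_cartesian_ode
    (γ : ℝ → ℝ × ℝ) (φγ κ : ℝ → ℝ)
    (hγ : ∀ σ, HasDerivAt γ (Real.cos (φγ σ), Real.sin (φγ σ)) σ)
    (hφγ : ∀ σ, HasDerivAt φγ (κ σ) σ)
    (hκ : Continuous κ)
    (s n α v δ : ℝ → ℝ) (l : ℝ) (hl : 0 < l)
    (hpos : ∀ t, 0 < 1 - n t * κ (s t))
    (hs : ∀ t, HasDerivAt s (v t * Real.cos (α t) / (1 - n t * κ (s t))) t)
    (hn : ∀ t, HasDerivAt n (v t * Real.sin (α t)) t)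
    (hα : ∀ t, HasDerivAt α
      (v t / l * Real.tan (δ t)
        - κ (s t) * v t * Real.cos (α t) / (1 - n t * κ (s t))) t) :
    ∀ t : ℝ,
      HasDerivAt (fun τ => (γ (s τ)).1 - n τ * Real.sin (φγ (s τ)))
        (v t * Real.cos (φγ (s t) + α t)) t ∧
      HasDerivAt (fun τ => (γ (s τ)).2 + n τ * Real.cos (φγ (s τ)))
        (v t * Real.sin (φγ (s t) + α t)) t ∧
      HasDerivAt (fun τ => φγ (s τ) + α τ) (v t / l * Real.tan (δ t)) t :=
  frenet_ode_implies_cartesian_ode_general γ φγ κ hγ hφγ s n α v δ l hpos hs hn hα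
end
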